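/- arXiv:2308.12793 — 7 statements merged into one kernel-verified Lean document; each statement's English description precedes it below -/
import Mathlib

section
/- Fix ρ ∈ (0,1) and constants c₁, c₂, c₃, β > 0. Suppose f : [0,1] → ℝ is twice differentiable and satisfies, for all x ∈ [0,1], f(1−x) = c₁(exp(ρx)−1) + c₂·exp(ρx) + c₃(exp(ρx)−1) + ρ·∫_{z=0}^{x} exp(ρ(x−z))·f(z) dz. Then f''(x) = 0 for all x ∈ [0,1], i.e. f is affine. -/
open Real MeasureTheory intervalIntegral Set

theorem integral_equation_solution_affine
    (ρ c₁ c₂ c₃ β : ℝ) (hρ : ρ ∈ Set.Ioo (0:ℝ) 1)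
    (hc₁ : 0 < c₁) (hc₂ : 0 < c₂) (hc₃ : 0 < c₃) (hβ : 0 < β)
    (f f' f'' : ℝ → ℝ)
    (hf : ∀ x, HasDerivAt f (f' x) x)
    (hf' : ∀ x, HasDerivAt f' (f'' x) x)
    (heq : ∀ x ∈ Set.Icc (0:ℝ) 1,
      f (1 - x) = c₁ * (Real.exp (ρ * x) - 1) + c₂ * Real.exp (ρ * x)
        + c₃ * (Real.exp (ρ * x) - 1)
        + ρ * ∫ z in (0:ℝ)..x, Real.exp (ρ * (x - z)) * f z) :
    ∀ x ∈ Set.Icc (0:ℝ) 1, f'' x = 0 := by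
  have hfc : Continuous f := continuous_iff_continuousAt.mpr fun x => (hf x).continuousAt
  set C : ℝ := c₁ + c₂ + c₃ with hC
  set D : ℝ := c₁ + c₃ with hD
  set F : ℝ → ℝ := fun x => ∫ z in (0:ℝ)..x, Real.exp (-(ρ * z)) * f z with hF
  have hcont : Continuous fun z => Real.exp (-(ρ * z)) * f z := by
    exact ((continuous_const.mul continuous_id).neg.rexp).mul hfc
  have hFder : ∀ x : ℝ, HasDerivAt F (Real.exp (-(ρ * x)) * f x) x := by
    intro x
    exact intervalIntegral.integral_hasDerivAt_right (hcont.intervalIntegrable _ _)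
      (hcont.stronglyMeasurableAtFilter _ _) hcont.continuousAt
  set G : ℝ → ℝ := fun x => C * Real.exp (ρ * x) - D + ρ * (Real.exp (ρ * x) * F x) with hG
  -- rewrite the integral
  have key : ∀ x : ℝ, (∫ z in (0:ℝ)..x, Real.exp (ρ * (x - z)) * f z)
      = Real.exp (ρ * x) * F x := by
    intro x
    rw [hF, ← intervalIntegral.integral_const_mul]
    congr 1
    funext z
    rw [← mul_assoc, ← Real.exp_add, show ρ * x + -(ρ * z) = ρ * (x - z) by ring]
  have heq' : ∀ x ∈ Set.Icc (0:ℝ) 1, f (1 - x) = G x := by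
    intro x hx
    rw [heq x hx, key x, hG]
    ring
  -- derivative of G
  have hexp : ∀ x : ℝ, HasDerivAt (fun x => Real.exp (ρ * x)) (Real.exp (ρ * x) * (ρ * 1)) x :=
    fun x => ((hasDerivAt_id x).const_mul ρ).exp
  have hGder : ∀ x : ℝ, HasDerivAt G (ρ * (G x + D + f x)) x := by
    intro x
    have h1 : Real.exp (ρ * x) * Real.exp (-(ρ * x)) = 1 := by
      rw [← Real.exp_add]; simp
    have h := ((((hexp x).const_mul C).sub_const D).add
      (((hexp x).mul (hFder x)).const_mul ρ))
    have heqd : C * (Real.exp (ρ * x) * (ρ * 1)) - 0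
        + ρ * (Real.exp (ρ * x) * (ρ * 1) * F x + Real.exp (ρ * x) * (Real.exp (-(ρ * x)) * f x))
        = ρ * (G x + D + f x) := by
      rw [hG]
      linear_combination ρ * f x * h1
    rw [← heqd]
    refine h.congr_deriv ?_
    ring
  have hgin : ∀ x : ℝ, HasDerivAt (fun x : ℝ => 1 - x) (-1 : ℝ) x := by
    intro x
    simpa using (hasDerivAt_id x).const_sub 1
  have hudiff := uniqueDiffOn_Icc (one_pos : (0:ℝ) < 1)
  -- step A
  have hA : ∀ x ∈ Set.Icc (0:ℝ) 1, f' (1 - x) * (-1) = ρ * (f (1 - x) + D + f x) := by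
    intro x hx
    have hL : HasDerivAt (fun x => f (1 - x)) (f' (1 - x) * (-1)) x :=
      (hf (1 - x)).comp x (hgin x)
    have hL' : HasDerivWithinAt G (f' (1 - x) * (-1)) (Set.Icc 0 1) x :=
      hL.hasDerivWithinAt.congr (fun y hy => (heq' y hy).symm) (heq' x hx).symm
    have := (hudiff x hx).eq_deriv _ hL' (hGder x).hasDerivWithinAt
    rw [this, ← heq' x hx]
  -- symmetry of f'
  have hsym : ∀ x ∈ Set.Icc (0:ℝ) 1, f' x = f' (1 - x) := by
    intro x hx
    have hx' : (1 - x) ∈ Set.Icc (0:ℝ) 1 := ⟨by linarith [hx.2], by linarith [hx.1]⟩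
    have h1 := hA x hx
    have h2 := hA (1 - x) hx'
    rw [show (1:ℝ) - (1 - x) = x by ring] at h2
    linarith
  -- step C : differentiate identity A
  have hC2 : ∀ x ∈ Set.Icc (0:ℝ) 1, f'' (1 - x) = 0 := by
    intro x hx
    have hL2 : HasDerivAt (fun x => f' (1 - x) * (-1)) (f'' (1 - x) * (-1) * (-1)) x :=
      ((hf' (1 - x)).comp x (hgin x)).mul_const (-1)
    have hR2 : HasDerivAt (fun x => ρ * (f (1 - x) + D + f x))
        (ρ * (f' (1 - x) * (-1) + f' x)) x := by
      exact ((((hf (1 - x)).comp x (hgin x)).add_const D).add (hf x)).const_mul ρ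
    have hL2' : HasDerivWithinAt (fun x => f' (1 - x) * (-1))
        (ρ * (f' (1 - x) * (-1) + f' x)) (Set.Icc 0 1) x :=
      hR2.hasDerivWithinAt.congr (fun y hy => hA y hy) (hA x hx)
    have := (hudiff x hx).eq_deriv _ hL2.hasDerivWithinAt hL2'
    have hs := hsym x hx
    linear_combination this + ρ * hs
  intro x hx
  have hx' : (1 - x) ∈ Set.Icc (0:ℝ) 1 := ⟨by linarith [hx.2], by linarith [hx.1]⟩
  have := hC2 (1 - x) hx'
  rwa [show (1:ℝ) - (1 - x) = x by ring] at this
end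

section
/- Let ρ ∈ (0,1), α, λ, mK, mB, mB2, mK2 > 0 with ρ = λ·mK·mB. Define f(x) = ρ·λ·mK·mB2/(2mB) + [α·λ·mK + ρ·λ²·mK²·mB2 + ρ·mK2/mK]·(1−x)/(1−ρ). Then f satisfies, for all x ∈ [0,1), f(1−x) = λ·mK·{ (α/ρ)(exp(ρx)−1) + (λ·mK·mB2/2)·exp(ρx) + mB·(mK2/(ρ·mK))·(exp(ρx)−1) + ∫_{z=0}^{x} mB·exp(ρ(x−z))·f(z) dz }. -/
open Real MeasureTheory intervalIntegral Set

theorem density_solves_integral_equation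
    (ρ α lam mK mB mB2 mK2 : ℝ) (hρ : ρ ∈ Set.Ioo (0:ℝ) 1)
    (hα : 0 < α) (hlam : 0 < lam) (hmK : 0 < mK) (hmB : 0 < mB)
    (hmB2 : 0 < mB2) (hmK2 : 0 < mK2) (hρeq : ρ = lam * mK * mB)
    (f : ℝ → ℝ)
    (hf : ∀ x, f x = ρ * lam * mK * mB2 / (2 * mB)
      + (α * lam * mK + ρ * lam ^ 2 * mK ^ 2 * mB2 + ρ * mK2 / mK)
          * (1 - x) / (1 - ρ)) :
    ∀ x ∈ Set.Ico (0:ℝ) 1,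
      f (1 - x) = lam * mK *
        ((α / ρ) * (Real.exp (ρ * x) - 1)
          + (lam * mK * mB2 / 2) * Real.exp (ρ * x)
          + mB * (mK2 / (ρ * mK)) * (Real.exp (ρ * x) - 1)
          + ∫ z in (0:ℝ)..x, mB * Real.exp (ρ * (x - z)) * f z) := by
  obtain ⟨hρ0, hρ1⟩ := hρ
  intro x hx
  have hρne : ρ ≠ 0 := ne_of_gt hρ0
  have h1ρ : (1:ℝ) - ρ ≠ 0 := by linarith
  set C := ρ * lam * mK * mB2 / (2 * mB) with hC
  set D := (α * lam * mK + ρ * lam ^ 2 * mK ^ 2 * mB2 + ρ * mK2 / mK) / (1 - ρ) with hD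
  have hf' : ∀ z, f z = C + D * (1 - z) := by
    intro z; rw [hf, hC, hD]; ring
  set A := -(C + D) / ρ + D / ρ ^ 2 with hA
  set B := D / ρ with hB
  have hfun : (fun z => mB * Real.exp (ρ * (x - z)) * f z)
      = fun z => mB * Real.exp (ρ * x) * (Real.exp (-(ρ * z)) * (C + D - D * z)) := by
    funext z
    rw [hf' z, show ρ * (x - z) = ρ * x + -(ρ * z) by ring, Real.exp_add]
    ring
  have hder : ∀ z ∈ Set.uIcc (0:ℝ) x,
      HasDerivAt (fun z => mB * Real.exp (ρ * x) * (Real.exp (-(ρ * z)) * (A + B * z)))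
        (mB * Real.exp (ρ * x) * (Real.exp (-(ρ * z)) * (C + D - D * z))) z := by
    intro z _
    have h1 : HasDerivAt (fun z : ℝ => -(ρ * z)) (-ρ) z := by
      exact (((hasDerivAt_id z).const_mul ρ).neg).congr_deriv (by ring)
    have h2 := h1.exp
    have h3 : HasDerivAt (fun z : ℝ => A + B * z) B z := by
      simpa using ((hasDerivAt_id z).const_mul B).const_add A
    have h4 := (h2.mul h3).const_mul (mB * Real.exp (ρ * x))
    refine h4.congr_deriv ?_
    rw [hA, hB]
    field_simp
    ring
  have hcont : IntervalIntegrable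
      (fun z => mB * Real.exp (ρ * x) * (Real.exp (-(ρ * z)) * (C + D - D * z)))
      volume 0 x := by
    apply Continuous.intervalIntegrable
    fun_prop
  have hint : (∫ z in (0:ℝ)..x, mB * Real.exp (ρ * (x - z)) * f z)
      = mB * Real.exp (ρ * x) * (Real.exp (-(ρ * x)) * (A + B * x))
        - mB * Real.exp (ρ * x) * (Real.exp (-(ρ * 0)) * (A + B * 0)) := by
    rw [hfun]
    exact intervalIntegral.integral_eq_sub_of_hasDerivAt hder hcont
  rw [hint, hf' (1 - x), hA, hB, hC, hD]
  have hE : Real.exp (-(ρ * x)) = (Real.exp (ρ * x))⁻¹ := by rw [Real.exp_neg]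
  rw [hE]
  have hEne : Real.exp (ρ * x) ≠ 0 := Real.exp_ne_zero _
  subst hρeq
  simp only [mul_zero, neg_zero, Real.exp_zero]
  field_simp
  ring
end

section
/- Let ρ ∈ (0,1) and let g : [0,1] → ℝ be continuous and satisfy, for all x ∈ [0,1], g(1−x) = ρ·∫_{z=0}^{x} exp(ρ(x−z))·g(z) dz, together with ∫_{0}^{1} g(x) dx = 0. Then g ≡ 0 on [0,1]. -/
/-!
Split the kernel as `1 + (exp (ρ (x - z)) - 1)`. Since `∫₀¹ g = 0`, the integral of `g` over
`[0, x]` equals `-∫ₓ¹ g`, of size at most `M (1 - x)` for `M = sup |g|`; the remainder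
`exp (ρ (x - z)) - 1` is at most `2 (x - z)` and contributes at most `M x²`. Hence the right-hand
side of the equation is at most `ρ M (1 - x + x²) ≤ ρ M`, so `M ≤ ρ M` and `M = 0`.
-/

open Real MeasureTheory intervalIntegral Set

theorem IsCompact.eq_zero_of_forall_norm_le_mul {X E : Type*} [TopologicalSpace X]
    [NormedAddCommGroup E] {s : Set X} (hs : IsCompact s) {g : X → E} (hg : ContinuousOn g s)
    {k : ℝ} (hk : k < 1) (h : ∀ M, (∀ y ∈ s, ‖g y‖ ≤ M) → ∀ x ∈ s, ‖g x‖ ≤ k * M) :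
    ∀ x ∈ s, g x = 0 := by
  intro x hx
  obtain ⟨x₀, hx₀, hmax⟩ := hs.exists_isMaxOn ⟨x, hx⟩ hg.norm
  have hgx₀ : ‖g x₀‖ ≤ k * ‖g x₀‖ := h _ (fun y hy => hmax hy) x₀ hx₀
  have hgx₀_zero : ‖g x₀‖ = 0 := by nlinarith [norm_nonneg (g x₀)]
  exact norm_le_zero_iff.1 (hgx₀_zero ▸ hmax hx)

theorem abs_integral_exp_mul_sub_sub_one_mul_le {g : ℝ → ℝ} {ρ x M : ℝ} (hρ : |ρ| ≤ 1)
    (hx₀ : 0 ≤ x) (hx₁ : x ≤ 1) (hM : ∀ z ∈ Icc 0 x, |g z| ≤ M) :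
    |∫ z in (0:ℝ)..x, (exp (ρ * (x - z)) - 1) * g z| ≤ M * x ^ 2 := by
  have hker : ∀ z ∈ Icc 0 x, |exp (ρ * (x - z)) - 1| ≤ 2 * (x - z) := by
    rintro z ⟨hz₀, hzx⟩
    have hxz : |x - z| ≤ 1 := abs_le.2 ⟨by linarith, by linarith⟩
    calc |exp (ρ * (x - z)) - 1| ≤ 2 * |ρ * (x - z)| :=
          abs_exp_sub_one_le (by rw [abs_mul]; nlinarith [abs_nonneg ρ, abs_nonneg (x - z)])
      _ ≤ 2 * (x - z) := by
          rw [abs_mul, abs_of_nonneg (sub_nonneg.2 hzx)]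
          nlinarith [abs_nonneg ρ]
  calc |∫ z in (0:ℝ)..x, (exp (ρ * (x - z)) - 1) * g z|
      ≤ ∫ z in (0:ℝ)..x, M * (2 * (x - z)) := by
        rw [← Real.norm_eq_abs]
        refine norm_integral_le_of_norm_le hx₀ (Filter.Eventually.of_forall fun z hz => ?_)
          (Continuous.intervalIntegrable (by fun_prop : Continuous fun z => M * (2 * (x - z))) _ _)
        have hz : z ∈ Icc 0 x := Ioc_subset_Icc_self hz
        rw [Real.norm_eq_abs, abs_mul, mul_comm]
        exact mul_le_mul (hM z hz) (hker z hz) (abs_nonneg _) ((abs_nonneg _).trans (hM z hz))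
    _ = M * x ^ 2 := by
        rw [intervalIntegral.integral_const_mul, intervalIntegral.integral_const_mul,
          integral_sub intervalIntegrable_const intervalIntegral.intervalIntegrable_id,
          intervalIntegral.integral_const, integral_id]
        simp only [sub_zero, smul_eq_mul]
        ring

theorem abs_integral_le_of_integral_eq_zero {g : ℝ → ℝ} {a b x M : ℝ} (hax : a ≤ x) (hxb : x ≤ b)
    (hg : IntervalIntegrable g volume a b) (hint : ∫ z in a..b, g z = 0)
    (hM : ∀ z ∈ Icc x b, |g z| ≤ M) :
    |∫ z in a..x, g z| ≤ M * (b - x) := by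
  obtain ⟨hgax, hgxb⟩ := (IntervalIntegrable.trans_iff
    (by rw [uIcc_of_le (hax.trans hxb)]; exact ⟨hax, hxb⟩)).1 hg
  have hsplit := integral_add_adjacent_intervals hgax hgxb
  rw [hint, add_eq_zero_iff_eq_neg] at hsplit
  rw [hsplit, abs_neg, ← abs_of_nonneg (sub_nonneg.2 hxb), ← Real.norm_eq_abs]
  exact norm_integral_le_of_norm_le_const fun z hz =>
    hM z (Ioc_subset_Icc_self (uIoc_of_le hxb ▸ hz))

theorem abs_integral_exp_mul_sub_mul_le {g : ℝ → ℝ} {ρ x M : ℝ} (hρ : |ρ| ≤ 1)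
    (hx : x ∈ Icc (0:ℝ) 1) (hg : ContinuousOn g (Icc 0 1)) (hint : ∫ z in (0:ℝ)..1, g z = 0)
    (hM : ∀ z ∈ Icc (0:ℝ) 1, |g z| ≤ M) :
    |∫ z in (0:ℝ)..x, exp (ρ * (x - z)) * g z| ≤ M := by
  obtain ⟨hx₀, hx₁⟩ := hx
  have hg01 : IntervalIntegrable g volume 0 1 := hg.intervalIntegrable_of_Icc zero_le_one
  have hg0x : IntervalIntegrable g volume 0 x :=
    hg01.mono_set (by rw [uIcc_of_le hx₀, uIcc_of_le zero_le_one]; exact Icc_subset_Icc_right hx₁)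
  have hker : IntervalIntegrable (fun z => (exp (ρ * (x - z)) - 1) * g z) volume 0 x :=
    hg0x.continuousOn_mul (Continuous.continuousOn (by fun_prop))
  have hM₀ : 0 ≤ M := (abs_nonneg _).trans (hM 0 ⟨le_rfl, zero_le_one⟩)
  calc |∫ z in (0:ℝ)..x, exp (ρ * (x - z)) * g z|
      = |(∫ z in (0:ℝ)..x, (exp (ρ * (x - z)) - 1) * g z) + ∫ z in (0:ℝ)..x, g z| := by
        rw [← integral_add hker hg0x]
        simp only [sub_mul, one_mul, sub_add_cancel]
    _ ≤ M * x ^ 2 + M * (1 - x) := (abs_add_le _ _).trans (add_le_add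
        (abs_integral_exp_mul_sub_sub_one_mul_le hρ hx₀ hx₁ fun z hz =>
          hM z ⟨hz.1, hz.2.trans hx₁⟩)
        (abs_integral_le_of_integral_eq_zero hx₀ hx₁ hg01 hint fun z hz =>
          hM z ⟨hx₀.trans hz.1, hz.2⟩))
    _ ≤ M := by nlinarith [mul_nonneg hM₀ (mul_nonneg hx₀ (sub_nonneg.2 hx₁))]

theorem homogeneous_equation_unique
    (ρ : ℝ) (hρ : ρ ∈ Set.Ioo (0:ℝ) 1)
    (g : ℝ → ℝ) (hg : ContinuousOn g (Set.Icc 0 1))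
    (heq : ∀ x ∈ Set.Icc (0:ℝ) 1,
      g (1 - x) = ρ * ∫ z in (0:ℝ)..x, Real.exp (ρ * (x - z)) * g z)
    (hint : (∫ x in (0:ℝ)..1, g x) = 0) :
    ∀ x ∈ Set.Icc (0:ℝ) 1, g x = 0 := by
  obtain ⟨hρ₀, hρ₁⟩ := hρ
  refine isCompact_Icc.eq_zero_of_forall_norm_le_mul hg hρ₁ fun M hM y hy => ?_
  have hy' : 1 - y ∈ Icc (0:ℝ) 1 := ⟨sub_nonneg.2 hy.2, by linarith [hy.1]⟩
  have hgy := heq (1 - y) hy'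
  rw [sub_sub_cancel] at hgy
  simp only [Real.norm_eq_abs] at hM ⊢
  rw [hgy, abs_mul, abs_of_pos hρ₀]
  exact mul_le_mul_of_nonneg_left
    (abs_integral_exp_mul_sub_mul_le (abs_le.2 ⟨by linarith, hρ₁.le⟩) hy' hg hint hM) hρ₀.le
end

section
/- Let ρ ∈ (0,1) and g : [0,1] → ℝ continuous with g(1−x) = ρ·∫_{z=0}^{x} exp(ρ(x−z))·g(z) dz for all x ∈ [0,1]. Then for all x ∈ [0,1]: ∫_{u=1−x}^{1} g(u) du + ∫_{u=0}^{x} g(u) du = ∫_{u=0}^{x} g(u)·exp(ρ(x−u)) du. -/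
open Real MeasureTheory intervalIntegral Set

theorem homogeneous_integrated_identity
    (ρ : ℝ) (hρ : ρ ∈ Set.Ioo (0:ℝ) 1)
    (g : ℝ → ℝ) (hg : ContinuousOn g (Set.Icc 0 1))
    (heq : ∀ x ∈ Set.Icc (0:ℝ) 1,
      g (1 - x) = ρ * ∫ z in (0:ℝ)..x, Real.exp (ρ * (x - z)) * g z) :
    ∀ x ∈ Set.Icc (0:ℝ) 1,
      (∫ u in (1 - x)..1, g u) + (∫ u in (0:ℝ)..x, g u)
        = ∫ u in (0:ℝ)..x, g u * Real.exp (ρ * (x - u)) := by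
  -- abbreviations
  set G : ℝ → ℝ := fun y => ∫ u in (0:ℝ)..y, g u with hGdef
  set K : ℝ → ℝ := fun y => ∫ u in (0:ℝ)..y, g u * Real.exp (-(ρ * u)) with hKdef
  have hgexp : ContinuousOn (fun u => g u * Real.exp (-(ρ * u))) (Icc 0 1) :=
    hg.mul ((Real.continuous_exp.comp (continuous_const.mul continuous_id).neg).continuousOn)
  -- interval integrability on subintervals of [0,1]
  have hsub : ∀ a b : ℝ, a ∈ Icc (0:ℝ) 1 → b ∈ Icc (0:ℝ) 1 → uIcc a b ⊆ Icc 0 1 := by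
    intro a b ha hb
    rw [uIcc]
    exact Icc_subset_Icc (le_min ha.1 hb.1) (max_le ha.2 hb.2)
  have hgi : ∀ a b : ℝ, a ∈ Icc (0:ℝ) 1 → b ∈ Icc (0:ℝ) 1 → IntervalIntegrable g volume a b :=
    fun a b ha hb => (hg.mono (hsub a b ha hb)).intervalIntegrable
  have hgei : ∀ a b : ℝ, a ∈ Icc (0:ℝ) 1 → b ∈ Icc (0:ℝ) 1 →
      IntervalIntegrable (fun u => g u * Real.exp (-(ρ * u))) volume a b :=
    fun a b ha hb => (hgexp.mono (hsub a b ha hb)).intervalIntegrable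
  -- right FTC for G within Ici x
  have hmemIic : ∀ b : ℝ, b ∈ Ioc (0:ℝ) 1 → Icc (0:ℝ) 1 ∈ nhdsWithin b (Iic b) := by
    intro b hb
    rw [mem_nhdsWithin]
    exact ⟨Ioi 0, isOpen_Ioi, hb.1, fun y hy => ⟨hy.1.le, hy.2.trans hb.2⟩⟩
  have hmemIoi : ∀ x : ℝ, x ∈ Ico (0:ℝ) 1 → Icc (0:ℝ) 1 ∈ nhdsWithin x (Ioi x) := by
    intro x hx
    rw [mem_nhdsWithin]
    exact ⟨Iio 1, isOpen_Iio, hx.2, fun y hy => ⟨hx.1.trans hy.2.le, hy.1.le⟩⟩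
  have hG : ∀ x ∈ Ico (0:ℝ) 1, HasDerivWithinAt G (g x) (Ici x) x := by
    intro x hx
    exact intervalIntegral.integral_hasDerivWithinAt_right (t := Ioi x)
      (hgi 0 x (left_mem_Icc.2 zero_le_one) ⟨hx.1, hx.2.le⟩)
      ⟨Icc 0 1, hmemIoi x hx, hg.aestronglyMeasurable measurableSet_Icc⟩
      ((hg.continuousWithinAt ⟨hx.1, hx.2.le⟩).mono_of_mem_nhdsWithin (hmemIoi x hx))
  have hGl : ∀ b ∈ Ioc (0:ℝ) 1, HasDerivWithinAt G (g b) (Iic b) b := by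
    intro b hb
    exact intervalIntegral.integral_hasDerivWithinAt_right
      (hgi 0 b (left_mem_Icc.2 zero_le_one) ⟨hb.1.le, hb.2⟩)
      ⟨Icc 0 1, hmemIic b hb, hg.aestronglyMeasurable measurableSet_Icc⟩
      ((hg.continuousWithinAt ⟨hb.1.le, hb.2⟩).mono_of_mem_nhdsWithin (hmemIic b hb))
  have hK : ∀ x ∈ Ico (0:ℝ) 1, HasDerivWithinAt K (g x * Real.exp (-(ρ * x))) (Ici x) x := by
    intro x hx
    exact intervalIntegral.integral_hasDerivWithinAt_right (t := Ioi x)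
      (hgei 0 x (left_mem_Icc.2 zero_le_one) ⟨hx.1, hx.2.le⟩)
      ⟨Icc 0 1, hmemIoi x hx, hgexp.aestronglyMeasurable measurableSet_Icc⟩
      ((hgexp.continuousWithinAt ⟨hx.1, hx.2.le⟩).mono_of_mem_nhdsWithin (hmemIoi x hx))
  -- rewriting of the right-hand side
  have rhsR : ∀ x : ℝ, (∫ u in (0:ℝ)..x, g u * Real.exp (ρ * (x - u)))
      = Real.exp (ρ * x) * K x := by
    intro x
    rw [hKdef, ← intervalIntegral.integral_const_mul]
    refine intervalIntegral.integral_congr fun u _ => ?_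
    rw [show ρ * (x - u) = ρ * x + -(ρ * u) from by ring, Real.exp_add]
    ring
  -- the integral equation in terms of K
  have heqK : ∀ x ∈ Icc (0:ℝ) 1, g (1 - x) = ρ * (Real.exp (ρ * x) * K x) := by
    intro x hx
    rw [← rhsR x, heq x hx]
    congr 1
    exact intervalIntegral.integral_congr fun z _ => mul_comm _ _
  -- the two primitives and their equality
  have key : ∀ y ∈ Icc (0:ℝ) 1,
      ((∫ u in (0:ℝ)..1, g u) - G (1 - y) + G y) = Real.exp (ρ * y) * K y := by
    apply eq_of_has_deriv_right_eq (f' := fun x => g (1 - x) + g x) (a := 0) (b := 1)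
    · intro x hx
      have hmaps : MapsTo (fun y : ℝ => 1 - y) (Ici x) (Iic (1 - x)) := fun y hy => by
        simp only [mem_Iic]; simp only [mem_Ici] at hy; linarith
      have hcomp : HasDerivWithinAt (fun y : ℝ => G (1 - y)) (g (1 - x) * (0 - 1)) (Ici x) x :=
        HasDerivWithinAt.comp x (hGl (1 - x) ⟨by linarith [hx.2], by linarith [hx.1]⟩)
          (((hasDerivAt_const x (1:ℝ)).sub (hasDerivAt_id x)).hasDerivWithinAt) hmaps
      have := ((hasDerivWithinAt_const x (Ici x) (∫ u in (0:ℝ)..1, g u)).sub hcomp).add (hG x hx)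
      convert this using 1
      · rfl
      · ring
    · intro x hx
      have hE : HasDerivAt (fun y : ℝ => Real.exp (ρ * y)) (Real.exp (ρ * x) * (ρ * 1)) x :=
        ((hasDerivAt_id x).const_mul ρ).exp
      have hprod := hE.hasDerivWithinAt.mul (hK x hx)
      convert hprod using 1
      rotate_right
      have h1 : Real.exp (ρ * x) * (g x * Real.exp (-(ρ * x))) = g x := by
        rw [show Real.exp (ρ * x) * (g x * Real.exp (-(ρ * x)))
            = g x * (Real.exp (ρ * x) * Real.exp (-(ρ * x))) from by ring, ← Real.exp_add]
        simp
      have h2 : Real.exp (ρ * x) * (ρ * 1) * K x = g (1 - x) := by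
        rw [heqK x ⟨hx.1, hx.2.le⟩]; ring
      rw [h2, h1]
      rfl
      rfl
    · have hGc : ContinuousOn G (Icc 0 1) := by
        have := intervalIntegral.continuousOn_primitive_interval
          (f := g) (a := (0:ℝ)) (b := 1) (μ := volume)
          (by rw [uIcc_of_le zero_le_one]; exact hg.integrableOn_compact isCompact_Icc)
        rwa [uIcc_of_le zero_le_one] at this
      have h1x : ContinuousOn (fun y : ℝ => G (1 - y)) (Icc 0 1) := by
        refine hGc.comp (continuous_const.sub continuous_id).continuousOn ?_
        intro y hy
        exact ⟨by linarith [hy.2], by linarith [hy.1]⟩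
      exact (continuousOn_const.sub h1x).add hGc
    · have hKc : ContinuousOn K (Icc 0 1) := by
        have := intervalIntegral.continuousOn_primitive_interval
          (f := fun u => g u * Real.exp (-(ρ * u))) (a := (0:ℝ)) (b := 1) (μ := volume)
          (by rw [uIcc_of_le zero_le_one]; exact hgexp.integrableOn_compact isCompact_Icc)
        rwa [uIcc_of_le zero_le_one] at this
      exact ((Real.continuous_exp.comp (continuous_const.mul continuous_id)).continuousOn).mul hKc
    · simp [hGdef, hKdef]
  -- conclude
  intro x hx
  have hsplit : (∫ u in (0:ℝ)..(1 - x), g u) + (∫ u in (1 - x)..1, g u)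
      = ∫ u in (0:ℝ)..1, g u :=
    intervalIntegral.integral_add_adjacent_intervals
      (hgi 0 (1 - x) (left_mem_Icc.2 zero_le_one) ⟨by linarith [hx.2], by linarith [hx.1]⟩)
      (hgi (1 - x) 1 ⟨by linarith [hx.2], by linarith [hx.1]⟩ (right_mem_Icc.2 zero_le_one))
  have hk := key x hx
  rw [rhsR x]
  have : G (1 - x) = ∫ u in (0:ℝ)..(1 - x), g u := rfl
  linarith [hk, hsplit]
end

section
/- Let ρ ∈ (0,1) and g : [0,1] → ℝ continuous with ∫_{0}^{1} g = 0 and satisfying ∫_{u=1−x}^{1} g(u) du + ∫_{u=0}^{x} g(u) du = ∫_{u=0}^{x} g(u)·exp(ρ(x−u)) du for all x ∈ [0,1]. Then ‖g‖_∞ ≤ ρ·‖g‖_∞, and hence g ≡ 0. -/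
open Real MeasureTheory intervalIntegral Set

theorem contraction_implies_zero
    (ρ : ℝ) (hρ : ρ ∈ Set.Ioo (0:ℝ) 1)
    (g : ℝ → ℝ) (hg : ContinuousOn g (Set.Icc 0 1))
    (hint : (∫ x in (0:ℝ)..1, g x) = 0)
    (heq : ∀ x ∈ Set.Icc (0:ℝ) 1,
      (∫ u in (1 - x)..1, g u) + (∫ u in (0:ℝ)..x, g u)
        = ∫ u in (0:ℝ)..x, g u * Real.exp (ρ * (x - u))) :
    (⨆ x : Set.Icc (0:ℝ) 1, |g x|) ≤ ρ * ⨆ x : Set.Icc (0:ℝ) 1, |g x|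
      ∧ ∀ x ∈ Set.Icc (0:ℝ) 1, g x = 0 := by
  obtain ⟨hρ0, hρ1⟩ := hρ
  set M : ℝ := ⨆ x : Set.Icc (0:ℝ) 1, |g x| with hM
  -- boundedness of the sup
  have hbdd : BddAbove (Set.range fun x : Set.Icc (0:ℝ) 1 => |g x|) := by
    have h := (isCompact_Icc.image_of_continuousOn hg.abs).bddAbove
    rwa [← Set.range_restrict] at h
  have hle : ∀ u ∈ Set.Icc (0:ℝ) 1, |g u| ≤ M := fun u hu =>
    le_ciSup hbdd (⟨u, hu⟩ : Set.Icc (0:ℝ) 1)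
  -- primitives
  set Φ : ℝ → ℝ := fun t => ∫ u in (0:ℝ)..t, g u with hΦ
  set Ψ : ℝ → ℝ := fun t => ∫ u in (0:ℝ)..t, g u * Real.exp (-ρ * u) with hΨ
  have hgI : ∀ a b, a ∈ Set.Icc (0:ℝ) 1 → b ∈ Set.Icc (0:ℝ) 1 →
      IntervalIntegrable g volume a b := by
    intro a b ha hb
    exact (hg.mono (Set.uIcc_subset_Icc ha hb)).intervalIntegrable
  have hexpc : Continuous fun u : ℝ => Real.exp (-ρ * u) :=
    Real.continuous_exp.comp (continuous_const.mul continuous_id)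
  have hgI' : ∀ a b, a ∈ Set.Icc (0:ℝ) 1 → b ∈ Set.Icc (0:ℝ) 1 →
      IntervalIntegrable (fun u => g u * Real.exp (-ρ * u)) volume a b := by
    intro a b ha hb
    exact ((hg.mono (Set.uIcc_subset_Icc ha hb)).mul hexpc.continuousOn).intervalIntegrable
  have hcont : ∀ t ∈ Set.Ioo (0:ℝ) 1, ContinuousAt g t := by
    intro t ht
    exact hg.continuousAt (Icc_mem_nhds ht.1 ht.2)
  have hmeas : ∀ t ∈ Set.Ioo (0:ℝ) 1, StronglyMeasurableAtFilter g (nhds t) volume :=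
    ContinuousOn.stronglyMeasurableAtFilter isOpen_Ioo (hg.mono Set.Ioo_subset_Icc_self)
  have hΦd : ∀ t ∈ Set.Ioo (0:ℝ) 1, HasDerivAt Φ (g t) t := by
    intro t ht
    exact intervalIntegral.integral_hasDerivAt_right
      (hgI 0 t (by simp) ⟨ht.1.le, ht.2.le⟩) (hmeas t ht) (hcont t ht)
  have hΨd : ∀ t ∈ Set.Ioo (0:ℝ) 1,
      HasDerivAt Ψ (g t * Real.exp (-ρ * t)) t := by
    intro t ht
    refine intervalIntegral.integral_hasDerivAt_right
      (hgI' 0 t (by simp) ⟨ht.1.le, ht.2.le⟩) ?_ ?_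
    · exact ContinuousOn.stronglyMeasurableAtFilter isOpen_Ioo
        ((hg.mono Set.Ioo_subset_Icc_self).mul hexpc.continuousOn) t ht
    · exact (hcont t ht).mul hexpc.continuousAt
  -- rewrite the identity as  Φ x - Φ (1-x) = exp (ρ x) * Ψ x  on Icc 0 1
  have hAB : ∀ x ∈ Set.Icc (0:ℝ) 1, Φ x - Φ (1 - x) = Real.exp (ρ * x) * Ψ x := by
    intro x hx
    have h1x : (1 - x) ∈ Set.Icc (0:ℝ) 1 := ⟨by linarith [hx.2], by linarith [hx.1]⟩
    have hadj : Φ (1 - x) + (∫ u in (1 - x)..1, g u) = Φ 1 :=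
      intervalIntegral.integral_add_adjacent_intervals
        (hgI 0 (1 - x) (by simp) h1x) (hgI (1 - x) 1 h1x (by simp))
    have hΦ1 : Φ 1 = 0 := hint
    have hrhs : (∫ u in (0:ℝ)..x, g u * Real.exp (ρ * (x - u)))
        = Real.exp (ρ * x) * Ψ x := by
      rw [hΨ, ← intervalIntegral.integral_const_mul]
      apply intervalIntegral.integral_congr
      intro u _
      show g u * Real.exp (ρ * (x - u)) = Real.exp (ρ * x) * (g u * Real.exp (-ρ * u))
      rw [show ρ * (x - u) = ρ * x + -ρ * u by ring, Real.exp_add]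
      ring
    have h := heq x hx
    rw [hrhs] at h
    have : (∫ u in (1 - x)..1, g u) = -Φ (1 - x) := by linarith [hadj, hΦ1]
    rw [this] at h
    linarith [h]
  -- key pointwise identity on the interior
  have hkey : ∀ x ∈ Set.Ioo (0:ℝ) 1, g (1 - x) = ρ * (Φ x - Φ (1 - x)) := by
    intro x hx
    have h1x : (1 - x) ∈ Set.Ioo (0:ℝ) 1 := ⟨by linarith [hx.2], by linarith [hx.1]⟩
    -- derivative of LHS function A
    have hA : HasDerivAt (fun y => Φ y - Φ (1 - y)) (g x + g (1 - x)) x := by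
      have h1 : HasDerivAt (fun y : ℝ => 1 - y) (-1) x := by
        simpa using (hasDerivAt_id x).const_sub 1
      have h2 : HasDerivAt (fun y => Φ (1 - y)) (g (1 - x) * (-1)) x :=
        (hΦd (1 - x) h1x).comp x h1
      have := (hΦd x hx).sub h2
      rw [show g x + g (1 - x) = g x - g (1 - x) * (-1) by ring]
      exact this
    -- derivative of RHS function B
    have hB : HasDerivAt (fun y => Real.exp (ρ * y) * Ψ y)
        (Real.exp (ρ * x) * ρ * Ψ x + Real.exp (ρ * x) * (g x * Real.exp (-ρ * x))) x := by
      have he : HasDerivAt (fun y : ℝ => Real.exp (ρ * y)) (Real.exp (ρ * x) * ρ) x := by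
        simpa using ((hasDerivAt_id x).const_mul ρ).exp
      exact he.mul (hΨd x hx)
    -- the two functions agree near x
    have hev : (fun y => Φ y - Φ (1 - y)) =ᶠ[nhds x] (fun y => Real.exp (ρ * y) * Ψ y) := by
      filter_upwards [Icc_mem_nhds hx.1 hx.2] with y hy
      exact hAB y hy
    have hA' : HasDerivAt (fun y => Real.exp (ρ * y) * Ψ y) (g x + g (1 - x)) x :=
      hA.congr_of_eventuallyEq hev.symm
    have huniq := hA'.unique hB
    have hexp : Real.exp (ρ * x) * (g x * Real.exp (-ρ * x)) = g x := by
      rw [show Real.exp (ρ * x) * (g x * Real.exp (-ρ * x))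
          = g x * (Real.exp (ρ * x) * Real.exp (-ρ * x)) by ring, ← Real.exp_add]
      simp
    rw [hexp] at huniq
    have hBx : Real.exp (ρ * x) * Ψ x = Φ x - Φ (1 - x) := (hAB x ⟨hx.1.le, hx.2.le⟩).symm
    calc g (1 - x) = Real.exp (ρ * x) * ρ * Ψ x := by linarith
      _ = ρ * (Real.exp (ρ * x) * Ψ x) := by ring
      _ = ρ * (Φ x - Φ (1 - x)) := by rw [hBx]
  -- bound |Φ t| ≤ M * t
  have hΦbound : ∀ t ∈ Set.Icc (0:ℝ) 1, |Φ t| ≤ M * t := by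
    intro t ht
    have : ‖∫ u in (0:ℝ)..t, g u‖ ≤ M * |t - 0| := by
      apply intervalIntegral.norm_integral_le_of_norm_le_const
      intro u hu
      rw [Set.uIoc_of_le ht.1] at hu
      exact hle u ⟨hu.1.le, hu.2.trans ht.2⟩
    simpa [abs_of_nonneg ht.1] using this
  -- bound on the interior
  have hbound : ∀ y ∈ Set.Ioo (0:ℝ) 1, |g y| ≤ ρ * M := by
    intro y hy
    have hx : (1 - y) ∈ Set.Ioo (0:ℝ) 1 := ⟨by linarith [hy.2], by linarith [hy.1]⟩
    have h := hkey (1 - y) hx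
    rw [show (1 - (1 - y)) = y by ring] at h
    have h1 : |Φ (1 - y)| ≤ M * (1 - y) := hΦbound (1 - y) ⟨hx.1.le, hx.2.le⟩
    have h2 : |Φ y| ≤ M * y := hΦbound y ⟨hy.1.le, hy.2.le⟩
    calc |g y| = ρ * |Φ (1 - y) - Φ y| := by
          rw [h, abs_mul, abs_of_pos hρ0]
      _ ≤ ρ * (|Φ (1 - y)| + |Φ y|) := by
          apply mul_le_mul_of_nonneg_left (abs_sub (Φ (1 - y)) (Φ y)) hρ0.le
      _ ≤ ρ * (M * (1 - y) + M * y) := by nlinarith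
      _ = ρ * M := by ring
  -- extend bound to endpoints by continuity
  have hbound' : ∀ y ∈ Set.Icc (0:ℝ) 1, |g y| ≤ ρ * M := by
    intro y hy
    rcases eq_or_lt_of_le hy.1 with h0 | h0
    · -- y = 0
      subst h0
      have hne : (nhdsWithin (0:ℝ) (Set.Ioo 0 1)).NeBot := by
        rw [← mem_closure_iff_nhdsWithin_neBot, closure_Ioo (by norm_num : (0:ℝ) ≠ 1)]
        exact ⟨le_refl 0, zero_le_one⟩
      have htend : Filter.Tendsto (fun z => |g z|) (nhdsWithin 0 (Set.Ioo 0 1)) (nhds |g 0|) :=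
        ((hg.continuousWithinAt hy).mono Set.Ioo_subset_Icc_self).abs.tendsto
      exact le_of_tendsto htend (Filter.eventually_of_mem self_mem_nhdsWithin
        fun z hz => hbound z hz)
    rcases eq_or_lt_of_le hy.2 with h1 | h1
    · -- y = 1
      have hne : (nhdsWithin (1:ℝ) (Set.Ioo 0 1)).NeBot := by
        rw [← mem_closure_iff_nhdsWithin_neBot, closure_Ioo (by norm_num : (0:ℝ) ≠ 1)]
        exact ⟨zero_le_one, le_refl 1⟩
      subst h1
      have htend : Filter.Tendsto (fun z => |g z|) (nhdsWithin 1 (Set.Ioo 0 1)) (nhds |g 1|) :=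
        ((hg.continuousWithinAt hy).mono Set.Ioo_subset_Icc_self).abs.tendsto
      exact le_of_tendsto htend (Filter.eventually_of_mem self_mem_nhdsWithin
        fun z hz => hbound z hz)
    · exact hbound y ⟨h0, h1⟩
  -- conclude
  haveI : Nonempty (Set.Icc (0:ℝ) 1) := ⟨⟨0, by simp⟩⟩
  have hMle : M ≤ ρ * M := ciSup_le fun i => hbound' i i.2
  have hM0 : M ≤ 0 := by nlinarith
  refine ⟨hMle, fun x hx => ?_⟩
  have := hle x hx
  have : |g x| ≤ 0 := this.trans hM0
  exact abs_nonpos_iff.mp this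
end

section
/- Under the cancellation of the previous statement, for all x ∈ (0,1] and integers k ≥ 1: (α/ρ)(exp(ρx)−1) + (λmK·mB2/2)exp(ρx) + ((k−1)mB/(ρx))(exp(ρx)−1) + ∫_{y=0}^{x} mB·exp(ρ(x−y))·f(y) dy = αx/(1−ρ) + λmK·mB2/2 + ρλmK·mB2·x/(1−ρ) + mB·mK2·x/(mK(1−ρ)) + ((k−1)mB/(ρx))(exp(ρx)−1) − (mB·mK2/(ρmK))(exp(ρx)−1). -/
open Real MeasureTheory intervalIntegral Set

set_option maxHeartbeats 2000000 in
theorem conditional_batch_waiting_time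
    (ρ α lam mK mB mB2 mK2 : ℝ) (hρ : ρ ∈ Set.Ioo (0:ℝ) 1)
    (hα : 0 < α) (hlam : 0 < lam) (hmK : 0 < mK) (hmB : 0 < mB)
    (hmB2 : 0 ≤ mB2) (hmK2 : 0 ≤ mK2) (hρeq : ρ = lam * mK * mB)
    (a : ℝ)
    (ha : a = (α * lam * mK + ρ * lam ^ 2 * mK ^ 2 * mB2 + ρ * mK2 / mK) / (1 - ρ))
    (f : ℝ → ℝ)
    (hf : ∀ y, f y = ρ * lam * mK * mB2 / (2 * mB) + a * (1 - y)) :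
    ∀ x ∈ Set.Ioc (0:ℝ) 1, ∀ k : ℕ, 1 ≤ k →
      (α / ρ) * (Real.exp (ρ * x) - 1)
        + (lam * mK * mB2 / 2) * Real.exp (ρ * x)
        + (((k : ℝ) - 1) * mB / (ρ * x)) * (Real.exp (ρ * x) - 1)
        + (∫ y in (0:ℝ)..x, mB * Real.exp (ρ * (x - y)) * f y)
      = α * x / (1 - ρ) + lam * mK * mB2 / 2
        + ρ * lam * mK * mB2 * x / (1 - ρ)
        + mB * mK2 * x / (mK * (1 - ρ))
        + (((k : ℝ) - 1) * mB / (ρ * x)) * (Real.exp (ρ * x) - 1)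
        - (mB * mK2 / (ρ * mK)) * (Real.exp (ρ * x) - 1) := by
  obtain ⟨hρ0, hρ1⟩ := hρ
  intro x hx k hk
  set c : ℝ := ρ * lam * mK * mB2 / (2 * mB) with hc
  have hρne : ρ ≠ 0 := ne_of_gt hρ0
  -- antiderivative
  set F : ℝ → ℝ := fun y =>
    -(mB / ρ) * Real.exp (ρ * (x - y)) * (c + a * (1 - y))
      + (mB * a / ρ ^ 2) * Real.exp (ρ * (x - y)) with hF
  have hderiv : ∀ y ∈ Set.uIcc (0:ℝ) x,
      HasDerivAt F (mB * Real.exp (ρ * (x - y)) * f y) y := by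
    intro y _
    have he : HasDerivAt (fun y : ℝ => Real.exp (ρ * (x - y))) (-ρ * Real.exp (ρ * (x - y))) y := by
      have h1 : HasDerivAt (fun y : ℝ => ρ * (x - y)) (-ρ) y := by
        simpa using ((hasDerivAt_id y).const_sub x).const_mul ρ
      simpa [mul_comm] using h1.exp
    have hl : HasDerivAt (fun y : ℝ => c + a * (1 - y)) (-a) y := by
      simpa using (((hasDerivAt_id y).const_sub 1).const_mul a).const_add c
    have h2 := ((he.const_mul (-(mB / ρ))).mul hl).add (he.const_mul (mB * a / ρ ^ 2))
    refine h2.congr_deriv ?_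
    rw [hf y]
    field_simp
    ring
  have hcont : ContinuousOn (fun y => mB * Real.exp (ρ * (x - y)) * f y) (Set.uIcc (0:ℝ) x) := by
    have : Continuous fun y => mB * Real.exp (ρ * (x - y)) * f y := by
      simp only [hf]
      continuity
    exact this.continuousOn
  have hint : (∫ y in (0:ℝ)..x, mB * Real.exp (ρ * (x - y)) * f y) = F x - F 0 :=
    intervalIntegral.integral_eq_sub_of_hasDerivAt hderiv (hcont.intervalIntegrable)
  rw [hint]
  simp only [hF, hc]
  rw [ha, hρeq] at *
  have h1 : (1:ℝ) - lam * mK * mB ≠ 0 := by nlinarith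
  have hlamne : lam ≠ 0 := ne_of_gt hlam
  have hmKne : mK ≠ 0 := ne_of_gt hmK
  have hmBne : mB ≠ 0 := ne_of_gt hmB
  simp only [sub_self, mul_zero, Real.exp_zero]
  field_simp
  ring
end

section
/- If a differentiable function f : [0,1] → ℝ satisfies −f'(1−x) = C + ρ·f(1−x) + ρ·f(x) for all x ∈ [0,1], for constants C and ρ, and f is twice differentiable, then f'' ≡ 0 on [0,1]. -/
open Real Set

theorem reflected_derivative_relation_implies_affine
    (ρ C : ℝ) (f f' f'' : ℝ → ℝ)
    (hf : ∀ x, HasDerivAt f (f' x) x)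
    (hf' : ∀ x, HasDerivAt f' (f'' x) x)
    (hrel : ∀ x ∈ Set.Icc (0:ℝ) 1,
      -f' (1 - x) = C + ρ * f (1 - x) + ρ * f x) :
    ∀ x ∈ Set.Icc (0:ℝ) 1, f'' x = 0 := by
  -- membership of reflection
  have hmem : ∀ x ∈ Set.Icc (0:ℝ) 1, (1 - x) ∈ Set.Icc (0:ℝ) 1 := by
    intro x hx
    exact ⟨by linarith [hx.2], by linarith [hx.1]⟩
  -- relation at x itself
  have hrel' : ∀ x ∈ Set.Icc (0:ℝ) 1,
      -f' x = C + ρ * f x + ρ * f (1 - x) := by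
    intro x hx
    have := hrel (1 - x) (hmem x hx)
    simpa [sub_sub_cancel] using this
  -- f' x = f' (1-x) on Icc
  have hsym : ∀ x ∈ Set.Icc (0:ℝ) 1, f' x = f' (1 - x) := by
    intro x hx
    have h1 := hrel x hx
    have h2 := hrel' x hx
    linarith
  -- g = f x + f (1-x)
  set g : ℝ → ℝ := fun x => f x + f (1 - x) with hg_def
  have hg : ∀ x, HasDerivAt g (f' x - f' (1 - x)) x := by
    intro x
    have h1 : HasDerivAt (fun y : ℝ => (1 : ℝ) - y) (-1) x := by
      simpa using (hasDerivAt_id x).const_sub (1:ℝ)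
    have h2 : HasDerivAt (fun y : ℝ => f (1 - y)) (f' (1 - x) * (-1)) x :=
      (hf (1 - x)).comp x h1
    have := (hf x).add h2
    rw [hg_def]
    simpa [sub_eq_add_neg, Pi.add_def] using this
  have hg0 : ∀ x ∈ Set.Icc (0:ℝ) 1, HasDerivWithinAt g 0 (Set.Icc (0:ℝ) 1) x := by
    intro x hx
    have := (hg x).hasDerivWithinAt (s := Set.Icc (0:ℝ) 1)
    rwa [sub_eq_zero.mpr (hsym x hx)] at this
  -- g is constant on Icc
  have h0 : (0:ℝ) ∈ Set.Icc (0:ℝ) 1 := ⟨le_refl _, by norm_num⟩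
  have hgconst : ∀ x ∈ Set.Icc (0:ℝ) 1, g x = g 0 := by
    intro x hx
    have := (convex_Icc (0:ℝ) 1).norm_image_sub_le_of_norm_hasDerivWithin_le
      (f := g) (f' := fun _ => 0) (C := 0)
      (fun y hy => hg0 y hy) (fun y hy => by simp) h0 hx
    have : ‖g x - g 0‖ ≤ 0 := by simpa using this
    have := norm_le_zero_iff.mp this
    linarith [sub_eq_zero.mp this]
  -- f' constant on Icc
  have hf'const : ∀ x ∈ Set.Icc (0:ℝ) 1, f' x = -(C + ρ * g 0) := by
    intro x hx
    have h2 := hrel' x hx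
    have h3 := hgconst x hx
    simp only [hg_def]
    simp only [hg_def] at h3
    rw [← h3]
    linarith
  intro x hx
  have hud : UniqueDiffWithinAt ℝ (Set.Icc (0:ℝ) 1) x :=
    (uniqueDiffOn_Icc (by norm_num : (0:ℝ) < 1)) x hx
  have hA : HasDerivWithinAt f' (f'' x) (Set.Icc (0:ℝ) 1) x :=
    (hf' x).hasDerivWithinAt
  have hB : HasDerivWithinAt f' 0 (Set.Icc (0:ℝ) 1) x :=
    (hasDerivWithinAt_const x _ (-(C + ρ * g 0))).congr hf'const (hf'const x hx)
  have := hA.derivWithin hud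
  rw [hB.derivWithin hud] at this
  exact this.symm
end
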